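/- Let U_V and U_W be unitary operators on a finite-dimensional complex Hilbert space, P an orthogonal projection, and ρ a density operator (positive semidefinite with trace 1) whose support lies in the range of P, i.e., P ρ P = ρ. Then (1/2)·‖U_V ρ U_V† − U_W ρ U_W†‖₁ ≤ ‖U_V P − U_W P‖, where ‖·‖₁ is the trace norm and ‖·‖ the operator norm. -/

import Mathlib

open scoped Matrix ComplexOrder

/-- The trace norm of a complex matrix: the trace of the positive semidefinite
square root of `Mᴴ M`. -/
noncomputable def traceNorm {m : Type} [Fintype m] [DecidableEq m]
    (M : Matrix m m ℂ) : ℝ :=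
  ((Matrix.posSemidef_conjTranspose_mul_self M).1.eigenvectorUnitary.1 *
    Matrix.diagonal (((↑) : ℝ → ℂ) ∘ Real.sqrt ∘ (Matrix.posSemidef_conjTranspose_mul_self M).1.eigenvalues) *
    (star (Matrix.posSemidef_conjTranspose_mul_self M).1.eigenvectorUnitary :
      Matrix m m ℂ)).trace.re

/-- The operator (spectral) norm of a complex matrix. -/
noncomputable def opNorm {m : Type} [Fintype m] [DecidableEq m]
    (M : Matrix m m ℂ) : ℝ :=
  ‖Matrix.toEuclideanCLM (𝕜 := ℂ) M‖

/-! Since `P ρ = ρ`, with `D = U_V P - U_W P` the difference of the evolved states splits as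
`D ρ U_V† + U_W ρ D†`. The trace norm of a Hermitian `Δ` is `Re tr(E Δ)` for the contraction
`E = sign Δ`, and `Re tr(X ρ Y) ≤ ‖Y X‖` for a density operator `ρ`, so each of the two terms
contributes at most `‖D‖`. -/

open scoped MatrixOrder Matrix.Norms.L2Operator

namespace Matrix

lemma norm_apply_le_l2_opNorm {𝕜 : Type*} [RCLike 𝕜] {m n : Type*} [Fintype m] [Fintype n]
    [DecidableEq n] (N : Matrix m n 𝕜) (i : m) (j : n) : ‖N i j‖ ≤ ‖N‖ := by
  have hcol := N.l2_opNorm_mulVec (PiLp.single 2 j 1)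
  rw [PiLp.norm_single, norm_one, mul_one] at hcol
  calc ‖N i j‖ = ‖(EuclideanSpace.equiv m 𝕜).symm (N *ᵥ (PiLp.single 2 j (1 : 𝕜)).ofLp) i‖ := by
        simp
    _ ≤ _ := PiLp.norm_apply_le _ i
    _ ≤ ‖N‖ := hcol

section RCLike

variable {𝕜 : Type*} [RCLike 𝕜] {m : Type*} [Fintype m] [DecidableEq m]

lemma l2_opNorm_le_one_of_conjTranspose_mul_self_eq_one {A : Matrix m m 𝕜} (h : Aᴴ * A = 1) :
    ‖A‖ ≤ 1 := by
  have hA : A ∈ unitary (Matrix m m 𝕜) := by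
    rw [Unitary.mem_iff, star_eq_conjTranspose, h, mul_eq_one_comm.mp h]
    simp
  obtain _ | _ := subsingleton_or_nontrivial (Matrix m m 𝕜)
  · simp [Subsingleton.elim A 0]
  · exact (CStarRing.norm_of_mem_unitary hA).le

/-- Diagonalising `ρ = U diag(λ) U*` gives `tr(M ρ) = ∑ λᵢ (U* M U)ᵢᵢ`, and each diagonal entry
of `U* M U` is bounded by `‖U* M U‖ = ‖M‖`. -/
lemma PosSemidef.re_trace_mul_le {ρ : Matrix m m 𝕜} (hρ : ρ.PosSemidef) (M : Matrix m m 𝕜) :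
    RCLike.re (M * ρ).trace ≤ ‖M‖ * RCLike.re ρ.trace := by
  set U : unitary (Matrix m m 𝕜) := hρ.1.eigenvectorUnitary
  set N : Matrix m m 𝕜 := ((star U : unitary (Matrix m m 𝕜)) : Matrix m m 𝕜) * M * U
  have hN : ‖N‖ = ‖M‖ := by
    rw [CStarRing.norm_mul_coe_unitary, CStarRing.norm_coe_unitary_mul]
  have htr : (M * ρ).trace = ∑ i, N i i * hρ.1.eigenvalues i := by
    conv_lhs => rw [hρ.1.spectral_theorem, Unitary.conjStarAlgAut_apply]
    rw [← mul_assoc, ← mul_assoc, trace_mul_comm, ← mul_assoc, ← mul_assoc]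
    simp only [trace, diag_apply, mul_diagonal, Function.comp_apply, N, U, Unitary.coe_star]
  rw [htr, hρ.1.trace_eq_sum_eigenvalues, map_sum, map_sum, Finset.mul_sum]
  refine Finset.sum_le_sum fun i _ => ?_
  have hev := hρ.eigenvalues_nonneg i
  calc RCLike.re (N i i * hρ.1.eigenvalues i) = RCLike.re (N i i) * hρ.1.eigenvalues i := by simp
    _ ≤ ‖M‖ * hρ.1.eigenvalues i := by
      gcongr
      exact (RCLike.re_le_norm _).trans (hN ▸ N.norm_apply_le_l2_opNorm i i)
    _ = ‖M‖ * RCLike.re (hρ.1.eigenvalues i : 𝕜) := by simp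

lemma PosSemidef.re_trace_mul_mul_le {ρ : Matrix m m 𝕜} (hρ : ρ.PosSemidef) (X Y : Matrix m m 𝕜) :
    RCLike.re (X * ρ * Y).trace ≤ ‖Y * X‖ * RCLike.re ρ.trace := by
  rw [trace_mul_comm, ← mul_assoc]
  exact hρ.re_trace_mul_le _

end RCLike

lemma IsHermitian.exists_l2_opNorm_le_one_mul_eq_cfcAbs {m : Type*} [Fintype m] [DecidableEq m]
    {A : Matrix m m ℂ} (hA : A.IsHermitian) :
    ∃ E : Matrix m m ℂ, ‖E‖ ≤ 1 ∧ E * A = CFC.abs A := by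
  have hsign : ContinuousOn (fun x : ℝ => (SignType.sign x : ℝ)) (spectrum ℝ A) :=
    A.finite_real_spectrum.continuousOn _
  refine ⟨cfc (fun x : ℝ => (SignType.sign x : ℝ)) A, ?_, ?_⟩
  · refine norm_cfc_le zero_le_one fun x _ => ?_
    rcases lt_trichotomy x 0 with h | h | h <;> simp [h]
  · have hmul := cfc_mul (fun x : ℝ => (SignType.sign x : ℝ)) (fun x => x) A
    rw [cfc_id' ℝ A] at hmul
    rw [← hmul, CFC.abs_eq_cfc_norm A hA.isSelfAdjoint]
    exact cfc_congr fun x _ => by rw [sign_mul_self, Real.norm_eq_abs]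

end Matrix

open Matrix

lemma mul_mul_star_sub_mul_mul_star_eq {R : Type*} [Ring R] [StarRing R] {p ρ : R}
    (hρ : IsSelfAdjoint ρ) (hpρ : p * ρ = ρ) (a b : R) :
    a * ρ * star a - b * ρ * star b
      = (a * p - b * p) * ρ * star a + b * ρ * star (a * p - b * p) := by
  have hleft : (a * p - b * p) * ρ = (a - b) * ρ := by rw [← sub_mul, mul_assoc, hpρ]
  have hright : ρ * star (a * p - b * p) = ρ * star (a - b) := by
    rw [← hρ.star_eq, ← star_mul, hleft, star_mul, hρ.star_eq]
  rw [hleft, mul_assoc b ρ (star (a * p - b * p)), hright, star_sub]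
  noncomm_ring

lemma opNorm_eq_l2_opNorm {m : Type} [Fintype m] [DecidableEq m] (M : Matrix m m ℂ) :
    opNorm M = ‖M‖ :=
  rfl

lemma traceNorm_eq_re_trace_cfcAbs {m : Type} [Fintype m] [DecidableEq m] (M : Matrix m m ℂ) :
    traceNorm M = (CFC.abs M).trace.re := by
  have hMM := posSemidef_conjTranspose_mul_self M
  rw [CFC.abs, star_eq_conjTranspose, CFC.sqrt_eq_real_sqrt _ hMM.nonneg,
    cfcₙ_eq_cfc (hf0 := Real.sqrt_zero), hMM.1.cfc_eq Real.sqrt]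
  rfl

theorem trace_dist_le_opNorm_general
    {n : ℕ}
    (UV UW : Matrix (Fin n) (Fin n) ℂ)
    (hUV1 : UVᴴ * UV = 1)
    (hUW1 : UWᴴ * UW = 1)
    (P : Matrix (Fin n) (Fin n) ℂ)
    (hPidem : P * P = P)
    (ρ : Matrix (Fin n) (Fin n) ℂ)
    (hρpos : ρ.PosSemidef) (hρtr : ρ.trace = 1)
    (hsupp : P * ρ * P = ρ) :
    (1 / 2) * traceNorm (UV * ρ * UVᴴ - UW * ρ * UWᴴ) ≤ opNorm (UV * P - UW * P) := by
  have hPρ : P * ρ = ρ := by rw [← hsupp, ← mul_assoc, ← mul_assoc, hPidem]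
  have hsplit := mul_mul_star_sub_mul_mul_star_eq hρpos.1.isSelfAdjoint hPρ UV UW
  simp only [star_eq_conjTranspose] at hsplit
  set D := UV * P - UW * P
  obtain ⟨E, hE, hEΔ⟩ := ((hρpos.mul_mul_conjTranspose_same UV).1.sub
    (hρpos.mul_mul_conjTranspose_same UW).1).exists_l2_opNorm_le_one_mul_eq_cfcAbs
  have h₁ := hρpos.re_trace_mul_mul_le (E * D) UVᴴ
  have h₂ := hρpos.re_trace_mul_mul_le (E * UW) Dᴴ
  have hnorm₁ : ‖UVᴴ * (E * D)‖ ≤ 1 * (1 * ‖D‖) :=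
    norm_mul_le_of_le ((l2_opNorm_conjTranspose UV).trans_le
        (l2_opNorm_le_one_of_conjTranspose_mul_self_eq_one hUV1))
      (norm_mul_le_of_le hE le_rfl)
  have hnorm₂ : ‖Dᴴ * (E * UW)‖ ≤ ‖D‖ * (1 * 1) :=
    norm_mul_le_of_le (l2_opNorm_conjTranspose D).le
      (norm_mul_le_of_le hE (l2_opNorm_le_one_of_conjTranspose_mul_self_eq_one hUW1))
  have hΔ : traceNorm (UV * ρ * UVᴴ - UW * ρ * UWᴴ)
      = (E * D * ρ * UVᴴ).trace.re + (E * UW * ρ * Dᴴ).trace.re := by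
    rw [traceNorm_eq_re_trace_cfcAbs, ← hEΔ, hsplit]
    simp only [mul_add, trace_add, Complex.add_re, mul_assoc]
  rw [hρtr, RCLike.one_re, mul_one, RCLike.re_to_complex] at h₁ h₂
  rw [opNorm_eq_l2_opNorm, hΔ]
  linarith

/-- Trace distance of evolved states vs operator norm of the evolutions: for unitaries
`U_V, U_W`, a projection `P`, and a density operator `ρ` supported in the range of `P`,
`(1/2)‖U_V ρ U_V† - U_W ρ U_W†‖₁ ≤ ‖U_V P - U_W P‖`. -/
theorem trace_dist_le_opNorm
    {n : ℕ}
    (UV UW : Matrix (Fin n) (Fin n) ℂ)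
    (hUV1 : UVᴴ * UV = 1) (hUV2 : UV * UVᴴ = 1)
    (hUW1 : UWᴴ * UW = 1) (hUW2 : UW * UWᴴ = 1)
    (P : Matrix (Fin n) (Fin n) ℂ)
    (hPidem : P * P = P) (hPH : P.IsHermitian)
    (ρ : Matrix (Fin n) (Fin n) ℂ)
    (hρpos : ρ.PosSemidef) (hρtr : ρ.trace = 1)
    (hsupp : P * ρ * P = ρ) :
    (1 / 2) * traceNorm (UV * ρ * UVᴴ - UW * ρ * UWᴴ) ≤ opNorm (UV * P - UW * P) :=
  trace_dist_le_opNorm_general UV UW hUV1 hUW1 P hPidem ρ hρpos hρtr hsupp
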